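/- For any rule f and any nonempty position P, ord_f(P^T) = ord_f P, where P^T is the conjugate partition of P. -/

import Mathlib

/-!
A position is determined by its cells: `(r, c)` is a cell of `P` iff `c < P.getD r 0`.
Transposition swaps the two coordinates of every cell, while `chompAt P x a` removes the cells
with `x ≤ r` and `a ≤ c`; hence transposition is an involution on positions carrying the move
`chompAt P x a` to the move `chompAt Pᵀ a x`. By induction on the volume, every option `Q` of
`P` satisfies `ord Qᵀ = ord Q`, so the best option of `P` transposes to an option of `Pᵀ` and
`α (ord P) ≤ α (ord Pᵀ)`; by symmetry equality holds, and `α` is injective on `[1, n]`.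
-/

/-- A position: a nonincreasing list of positive naturals (trailing zeros removed). -/
def IsPos (P : List ℕ) : Prop := P.Pairwise (· ≥ ·) ∧ ∀ a ∈ P, 0 < a

/-- The result of chomping position `P`, keeping the first `x` entries and
truncating all later entries to at most `a` (then removing zeros). -/
def chompAt (P : List ℕ) (x a : ℕ) : List ℕ :=
  (P.take x ++ (P.drop x).map (fun b => min b a)).filter (fun b => 0 < b)

/-- A chomp move from `P` to `Q`. -/
def ChompMove (P Q : List ℕ) : Prop :=
  ∃ x a : ℕ, x < P.length ∧ Q = chompAt P x a ∧ Q ≠ P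

/-- `ord` is an ordinal assignment for the `n`-player rule `α` (with scores
`α 1, ..., α n`): `ord [] = 0`, ordinals of nonempty positions lie in `[1, n]`,
and `α (ord P)` is the maximum of `α (ord Q + 1)` over moves `P → Q` with `ord Q ≠ n`. -/
structure IsOrd (n : ℕ) (α : ℕ → ℝ) (ord : List ℕ → ℕ) : Prop where
  ord_empty : ord [] = 0
  ord_mem : ∀ P, IsPos P → P ≠ [] → 1 ≤ ord P ∧ ord P ≤ n
  exists_best : ∀ P, IsPos P → P ≠ [] →
    ∃ Q, ChompMove P Q ∧ ord Q ≠ n ∧ ord P = ord Q + 1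
  le_best : ∀ P, IsPos P → P ≠ [] → ∀ Q, ChompMove P Q → ord Q ≠ n →
    α (ord Q + 1) ≤ α (ord P)

/-- The conjugate (transposed) partition: `(transpose P)_i = #{j : P_j ≥ i+1}`. -/
def transpose (P : List ℕ) : List ℕ :=
  (List.range P.headI).map (fun i => P.countP (fun a => i + 1 ≤ a))

theorem eq_of_forall_lt_getD_iff {P Q : List ℕ} (hP : ∀ a ∈ P, 0 < a)
    (hQ : ∀ a ∈ Q, 0 < a) (h : ∀ r c, c < P.getD r 0 ↔ c < Q.getD r 0) : P = Q := by
  refine List.ext_getElem? fun r => ?_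
  have hr := eq_of_forall_lt_iff (h r)
  simp only [List.getD_eq_getElem?_getD] at hr
  cases hp : P[r]? <;> cases hq : Q[r]? <;>
    simp only [hp, hq, Option.getD_some, Option.getD_none] at hr
  · rfl
  · exact absurd hr (hQ _ (List.mem_of_getElem? hq)).ne
  · exact absurd hr (hP _ (List.mem_of_getElem? hp)).ne'
  · rw [hr]

section Transpose

theorem getD_le_headI {P : List ℕ} (hP : P.Pairwise (· ≥ ·)) (r : ℕ) :
    P.getD r 0 ≤ P.headI := by
  rcases P with _ | ⟨b, t⟩
  · simp
  rcases r with _ | r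
  · simp
  rw [List.getD_cons_succ, List.getD_eq_getElem?_getD]
  cases ht : t[r]?
  · exact Nat.zero_le b
  · exact List.rel_of_pairwise_cons hP (List.mem_of_getElem? ht)

theorem lt_countP_iff {P : List ℕ} (hP : P.Pairwise (· ≥ ·)) (r k : ℕ) :
    r < P.countP (fun a => k + 1 ≤ a) ↔ k + 1 ≤ P.getD r 0 := by
  induction P generalizing r with
  | nil => simp
  | cons b t ih =>
    have hbt : ∀ a ∈ t, a ≤ b := fun a ha => List.rel_of_pairwise_cons hP ha
    rcases r with _ | r
    · simp only [List.countP_pos_iff, List.getD_cons_zero, decide_eq_true_eq, List.mem_cons]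
      exact ⟨fun ⟨a, ha, hka⟩ => ha.elim (· ▸ hka) (hka.trans ∘ hbt a),
        fun hkb => ⟨b, .inl rfl, hkb⟩⟩
    · rw [List.countP_cons, List.getD_cons_succ, ← ih hP.of_cons r]
      by_cases hkb : k + 1 ≤ b
      · simp only [hkb, decide_true, if_true]
        omega
      · have ht : t.countP (fun a => k + 1 ≤ a) = 0 :=
          List.countP_eq_zero.2 fun a ha => by
            simpa using (hbt a ha).trans_lt (Nat.lt_of_not_le hkb)
        simp only [ht, hkb, decide_false, Bool.false_eq_true, if_false]
        omega

theorem length_transpose (P : List ℕ) : (transpose P).length = P.headI := by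
  simp [transpose]

theorem lt_getD_transpose_iff {P : List ℕ} (hP : P.Pairwise (· ≥ ·)) (r c : ℕ) :
    r < (transpose P).getD c 0 ↔ c < P.getD r 0 := by
  rcases lt_or_ge c P.headI with hc | hc
  · rw [List.getD_eq_getElem _ _ (by rwa [length_transpose])]
    simpa [transpose] using lt_countP_iff hP r c
  · rw [List.getD_eq_default _ _ (by rwa [length_transpose])]
    have := getD_le_headI hP r
    omega

theorem IsPos.transpose {P : List ℕ} (hP : IsPos P) : IsPos (transpose P) := by
  refine ⟨List.pairwise_lt_range.map _ fun i j hij => List.countP_mono_left ?_, ?_⟩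
  · intro a _ h
    simp only [decide_eq_true_eq] at h ⊢
    omega
  · simp only [_root_.transpose, List.mem_map, List.mem_range]
    rintro _ ⟨c, hc, rfl⟩
    obtain ⟨b, t, rfl⟩ := List.exists_cons_of_ne_nil (l := P) fun h => by simp [h] at hc
    exact (lt_countP_iff hP.1 0 c).2 hc

theorem transpose_transpose {P : List ℕ} (hP : IsPos P) : transpose (transpose P) = P :=
  eq_of_forall_lt_getD_iff hP.transpose.transpose.2 hP.2 fun r c => by
    rw [lt_getD_transpose_iff hP.transpose.1, lt_getD_transpose_iff hP.1]

theorem transpose_ne_nil {P : List ℕ} (hP : IsPos P) (hne : P ≠ []) : transpose P ≠ [] := by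
  rcases P with _ | ⟨b, t⟩
  · exact absurd rfl hne
  · exact List.ne_nil_of_length_pos (by simpa [length_transpose] using hP.2 b (by simp))

end Transpose

section Chomp

theorem chompAt_zero {P : List ℕ} (hP : ∀ a ∈ P, 0 < a) (x : ℕ) :
    chompAt P x 0 = P.take x := by
  rw [chompAt, List.filter_append, List.filter_eq_self.2 fun b hb => by
      simpa using hP b (List.mem_of_mem_take hb), List.filter_eq_nil_iff.2 fun b hb => by
      obtain ⟨c, -, rfl⟩ := List.mem_map.1 hb
      simp, List.append_nil]

theorem chompAt_of_pos {P : List ℕ} (hP : ∀ a ∈ P, 0 < a) (x : ℕ) {a : ℕ} (ha : 0 < a) :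
    chompAt P x a = P.take x ++ (P.drop x).map (fun b => min b a) := by
  refine List.filter_eq_self.2 fun b hb => ?_
  rcases List.mem_append.1 hb with hb | hb
  · simpa using hP b (List.mem_of_mem_take hb)
  · obtain ⟨c, hc, rfl⟩ := List.mem_map.1 hb
    simpa using ⟨hP c (List.mem_of_mem_drop hc), ha⟩

theorem getD_take (P : List ℕ) (x r : ℕ) :
    (P.take x).getD r 0 = if r < x then P.getD r 0 else 0 := by
  simp only [List.getD_eq_getElem?_getD, List.getElem?_take]
  split_ifs <;> rfl

theorem getD_take_append_map_drop (P : List ℕ) (x r : ℕ) (f : ℕ → ℕ) (hf : f 0 = 0) :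
    (P.take x ++ (P.drop x).map f).getD r 0 = if r < x then P.getD r 0 else f (P.getD r 0) := by
  simp only [List.getD_eq_getElem?_getD, List.getElem?_append, List.getElem?_take,
    List.getElem?_map, List.getElem?_drop, List.length_take]
  rcases lt_or_ge r P.length with hr | hr
  · rw [List.getElem?_eq_getElem hr]
    split_ifs
    · rfl
    · omega
    · omega
    · rw [show x + (r - min x P.length) = r by omega, List.getElem?_eq_getElem hr]
      rfl
  · simp [List.getElem?_eq_none hr, hf,
      List.getElem?_eq_none (by omega : P.length ≤ x + (r - min x P.length))]

theorem lt_getD_chompAt_iff {P : List ℕ} (hP : ∀ a ∈ P, 0 < a) (x a r c : ℕ) :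
    c < (chompAt P x a).getD r 0 ↔ c < P.getD r 0 ∧ (r < x ∨ c < a) := by
  rcases Nat.eq_zero_or_pos a with rfl | ha
  · rw [chompAt_zero hP, getD_take]
    split_ifs <;> omega
  · rw [chompAt_of_pos hP x ha, getD_take_append_map_drop P x r _ (Nat.zero_min a)]
    split_ifs <;> omega

theorem isPos_chompAt {P : List ℕ} (hP : P.Pairwise (· ≥ ·)) (x a : ℕ) :
    IsPos (chompAt P x a) := by
  refine ⟨List.Pairwise.filter _ ?_, fun b hb => by simpa using (List.mem_filter.1 hb).2⟩
  rw [← List.take_append_drop x P, List.pairwise_append] at hP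
  obtain ⟨htake, hdrop, hcross⟩ := hP
  refine List.pairwise_append.2 ⟨htake, hdrop.map _ fun b c hbc => min_le_min_right a hbc, ?_⟩
  rintro u hu _ hv
  obtain ⟨b, hb, rfl⟩ := List.mem_map.1 hv
  exact (min_le_left b a).trans (hcross u hu b hb)

theorem transpose_chompAt {P : List ℕ} (hP : IsPos P) (x a : ℕ) :
    transpose (chompAt P x a) = chompAt (transpose P) a x :=
  eq_of_forall_lt_getD_iff (isPos_chompAt hP.1 x a).transpose.2
    (isPos_chompAt hP.transpose.1 a x).2 fun c r => by
    rw [lt_getD_transpose_iff (isPos_chompAt hP.1 x a).1, lt_getD_chompAt_iff hP.2,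
      lt_getD_chompAt_iff hP.transpose.2, lt_getD_transpose_iff hP.1, or_comm]

theorem chompAt_of_headI_le {P : List ℕ} (hP : IsPos P) (x : ℕ) {a : ℕ} (ha : P.headI ≤ a) :
    chompAt P x a = P :=
  eq_of_forall_lt_getD_iff (isPos_chompAt hP.1 x a).2 hP.2 fun r c => by
    have := getD_le_headI hP.1 r
    rw [lt_getD_chompAt_iff hP.2]
    omega

theorem sum_chompAt (P : List ℕ) (x a : ℕ) :
    (chompAt P x a).sum = (P.take x).sum + ((P.drop x).map fun b => min b a).sum := by
  rw [chompAt, List.filter_congr (q := (· != 0)) fun b _ => by cases b <;> rfl,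
    List.sum_filter_bne_zero, List.sum_append]

end Chomp

section Move

theorem ChompMove.isPos {P Q : List ℕ} (h : ChompMove P Q) (hP : P.Pairwise (· ≥ ·)) :
    IsPos Q := by
  obtain ⟨x, a, -, rfl, -⟩ := h
  exact isPos_chompAt hP x a

theorem ChompMove.sum_lt {P Q : List ℕ} (h : ChompMove P Q) (hP : ∀ a ∈ P, 0 < a) :
    Q.sum < P.sum := by
  obtain ⟨x, a, -, rfl, hne⟩ := h
  have htrunc : ∃ b ∈ P.drop x, min b a < b := by
    by_contra! hall
    apply hne
    rw [chompAt, List.map_congr_left fun b hb => (min_le_left b a).antisymm (hall b hb),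
      List.map_id', List.take_append_drop]
    exact List.filter_eq_self.2 fun b hb => by simpa using hP b hb
  calc (chompAt P x a).sum
      = (P.take x).sum + ((P.drop x).map fun b => min b a).sum := sum_chompAt P x a
    _ < (P.take x).sum + ((P.drop x).map id).sum :=
        Nat.add_lt_add_left (List.sum_lt_sum _ _ (fun b _ => min_le_left b a) htrunc) _
    _ = P.sum := by rw [List.map_id, ← List.sum_append, List.take_append_drop]

theorem ChompMove.transpose {P Q : List ℕ} (h : ChompMove P Q) (hP : IsPos P) :
    ChompMove (transpose P) (transpose Q) := by
  have hQ := h.isPos hP.1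
  obtain ⟨x, a, -, rfl, hne⟩ := h
  have ha : a < P.headI := lt_of_not_ge fun ha => hne (chompAt_of_headI_le hP x ha)
  refine ⟨a, x, by rwa [length_transpose], transpose_chompAt hP x a, fun hT => hne ?_⟩
  rw [← transpose_transpose hQ, hT, transpose_transpose hP]

end Move

theorem IsOrd.apply_ord_le_apply_ord_transpose {n : ℕ} {α : ℕ → ℝ} {ord : List ℕ → ℕ}
    (hord : IsOrd n α ord) {P : List ℕ} (hP : IsPos P) (hne : P ≠ [])
    (hopt : ∀ Q, ChompMove P Q → ord (transpose Q) = ord Q) :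
    α (ord P) ≤ α (ord (transpose P)) := by
  obtain ⟨Q, hPQ, hQn, hPQ_ord⟩ := hord.exists_best P hP hne
  have hQT := hopt Q hPQ
  calc α (ord P) = α (ord (transpose Q) + 1) := by rw [hPQ_ord, hQT]
    _ ≤ α (ord (transpose P)) :=
        hord.le_best _ hP.transpose (transpose_ne_nil hP hne) _ (hPQ.transpose hP) (hQT ▸ hQn)

theorem ord_transpose_general (n : ℕ) (α : ℕ → ℝ)
    (hα : Set.InjOn α (Set.Icc 1 n)) (ord : List ℕ → ℕ) (hord : IsOrd n α ord)
    (P : List ℕ) (hP : IsPos P) (hne : P ≠ []) :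
    ord (transpose P) = ord P := by
  induction hs : P.sum using Nat.strong_induction_on generalizing P with
  | _ s ih =>
    have hopt : ∀ Q, ChompMove P Q → ord (transpose Q) = ord Q := by
      intro Q hPQ
      rcases eq_or_ne Q [] with rfl | hQ
      · rfl
      · exact ih _ (hs ▸ hPQ.sum_lt hP.2) Q (hPQ.isPos hP.1) hQ rfl
    have hPT := hP.transpose
    have hTne := transpose_ne_nil hP hne
    have hle := hord.apply_ord_le_apply_ord_transpose hP hne hopt
    have hge := hord.apply_ord_le_apply_ord_transpose hPT hTne fun Q hQ => by
      have := hopt _ (transpose_transpose hP ▸ hQ.transpose hPT)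
      rwa [transpose_transpose (hQ.isPos hPT.1), eq_comm] at this
    rw [transpose_transpose hP] at hge
    exact hα (hord.ord_mem _ hPT hTne) (hord.ord_mem _ hP hne) (hge.antisymm hle)

/-- the ordinal of a position is invariant under transposition. -/
theorem ord_transpose (n : ℕ) (hn : 2 ≤ n) (α : ℕ → ℝ)
    (hα : Set.InjOn α (Set.Icc 1 n)) (ord : List ℕ → ℕ) (hord : IsOrd n α ord)
    (P : List ℕ) (hP : IsPos P) (hne : P ≠ []) :
    ord (transpose P) = ord P :=
  ord_transpose_general n α hα ord hord P hP hne
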